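/- arXiv:1410.8628 — 2 statements merged into one kernel-verified Lean document; each statement's English description precedes it below -/
import Mathlib

section
/- For every π ∈ G_{r,n}, identified with the word π(1)π(2)⋯π(n) of its colored letters, and every integer j ≥ 0, the number Ω_π(j) of colored π-partitions with parts in [0,j]_{(r)} equals binomial(j + n − des(π), n). -/
open scoped BigOperators

/-- Lexicographic (color-first) strict order on colored letters `(value, color)`. -/
def letterLT (x y : ℕ × ℕ) : Prop :=
  x.2 < y.2 ∨ (x.2 = y.2 ∧ x.1 < y.1)

instance : DecidableRel letterLT := fun x y => by
  unfold letterLT; infer_instance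

/-- The colored permutation group `G_{r,n}`. -/
@[ext] structure ColoredPerm (r n : ℕ) where
  perm : Equiv.Perm (Fin n)
  col : Fin n → ZMod r

namespace ColoredPerm

variable {r n : ℕ}

instance : Mul (ColoredPerm r n) :=
  ⟨fun a b => ⟨a.perm * b.perm, fun i => a.col (b.perm i) + b.col i⟩⟩

instance : One (ColoredPerm r n) :=
  ⟨⟨1, fun _ => 0⟩⟩

instance : Inv (ColoredPerm r n) :=
  ⟨fun a => ⟨a.perm⁻¹, fun i => -a.col (a.perm⁻¹ i)⟩⟩

instance : Group (ColoredPerm r n) where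
  mul_assoc a b c := by
    refine ColoredPerm.ext (mul_assoc _ _ _) ?_
    funext i
    show a.col (b.perm (c.perm i)) + b.col (c.perm i) + c.col i
        = a.col ((b.perm * c.perm) i) + (b.col (c.perm i) + c.col i)
    rw [Equiv.Perm.mul_apply, add_assoc]
  one_mul a := by
    refine ColoredPerm.ext (one_mul _) ?_
    funext i
    show (0 : ZMod r) + a.col i = a.col i
    rw [zero_add]
  mul_one a := by
    refine ColoredPerm.ext (mul_one _) ?_
    funext i
    show a.col ((1 : Equiv.Perm (Fin n)) i) + 0 = a.col i
    simp
  inv_mul_cancel a := by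
    refine ColoredPerm.ext (inv_mul_cancel _) ?_
    funext i
    show -a.col (a.perm⁻¹ (a.perm i)) + a.col i = 0
    simp

/-- `ColoredPerm r n` is equivalent (as a type) to a product. -/
def toProd : ColoredPerm r n ≃ Equiv.Perm (Fin n) × (Fin n → ZMod r) where
  toFun a := (a.perm, a.col)
  invFun p := ⟨p.1, p.2⟩
  left_inv _ := rfl
  right_inv _ := rfl

instance [NeZero r] : Fintype (ColoredPerm r n) := Fintype.ofEquiv _ toProd.symm

instance : DecidableEq (ColoredPerm r n) := toProd.decidableEq

/-- The `i`-th letter of the one-line notation (0-indexed), as a pair (value, color);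
for `i = n` this is the sentinel letter `0₁`. Values are in `{1, …, n}`. -/
def letterAt (a : ColoredPerm r n) (i : ℕ) : ℕ × ℕ :=
  if h : i < n then ((a.perm ⟨i, h⟩ : ℕ) + 1, (a.col ⟨i, h⟩).val) else (0, 1)

/-- The descent set of a colored permutation (positions 0-indexed: position `i`
corresponds to the paper's `i+1 ∈ {1, …, n}`). -/
def Des (a : ColoredPerm r n) : Finset (Fin n) :=
  Finset.univ.filter fun i : Fin n => letterLT (letterAt a (i.1 + 1)) (letterAt a i.1)

/-- The descent number. -/
def des (a : ColoredPerm r n) : ℕ := (Des a).card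

/-- The internal descent number `|Des(π) ∩ {1, …, n−1}|`. -/
def intdes (a : ColoredPerm r n) : ℕ :=
  ((Des a).filter fun i : Fin n => i.1 + 1 < n).card

end ColoredPerm

/-- Weak lexicographic order on parts `(color, value)` of `[0,j]_{(r)}`. -/
def partLE (a b : ℕ × ℕ) : Prop :=
  a.1 < b.1 ∨ (a.1 = b.1 ∧ a.2 ≤ b.2)

/-- Strict lexicographic order on parts `(color, value)` of `[0,j]_{(r)}`. -/
def partLT (a b : ℕ × ℕ) : Prop :=
  a.1 < b.1 ∨ (a.1 = b.1 ∧ a.2 < b.2)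

/-- `x^{(k)}`: shift the color of the colored letter `x = (value, color)` down by `k` mod `r`. -/
def shiftLetter (r k : ℕ) (x : ℕ × ℕ) : ℕ × ℕ :=
  (x.1, (x.2 + r - k % r) % r)

/-- The `i`-th letter `π(i)` of a colored permutation, as a pair (value, color)
with value in `{1, …, n}`. -/
def letterOf {r n : ℕ} (a : ColoredPerm r n) (i : Fin n) : ℕ × ℕ :=
  ((a.perm i : ℕ) + 1, (a.col i).val)

/-- The one-line notation of a colored permutation, as a word of colored letters. -/
def word {r n : ℕ} (a : ColoredPerm r n) : List (ℕ × ℕ) :=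
  List.ofFn (letterOf a)

/-- A colored `π`-partition of the word `u = u(0) ⋯ u(m−1)` with parts in `[0,j]_{(r)}`:
a colored `P`-partition of the chain `u(0) ≺ ⋯ ≺ u(m−1) ≺ 0_1 ≺ ⋯ ≺ 0_{r−1}`
(the forced values `f(0_m) = (m,0)` of the zeros are built into the conditions). -/
def IsWordCPP (r j : ℕ) (u : List (ℕ × ℕ)) (f : Fin u.length → ℕ × ℕ) : Prop :=
  (∀ i, (f i).1 < r ∧ (f i).2 ≤ j) ∧
  (∀ i k : Fin u.length, i < k → partLE (f i) (f k)) ∧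
  (∀ i k : Fin u.length, i < k → (f i).1 = (f k).1 →
      letterLT (shiftLetter r (f i).1 (u.get k)) (shiftLetter r (f i).1 (u.get i)) →
      partLT (f i) (f k)) ∧
  (∀ i : Fin u.length, ∀ m, 1 ≤ m → m < r → partLE (f i) (m, 0)) ∧
  (∀ i : Fin u.length, ∀ m, 1 ≤ m → m < r → (f i).1 = m →
      letterLT (shiftLetter r m ((0 : ℕ), m)) (shiftLetter r m (u.get i)) →
      partLT (f i) (m, 0)) ∧
  (∀ i, (f i).2 = j → (u.get i).2 = (f i).1)

/-- `Ω_π(j)` for a word `π`: the number of colored `π`-partitions with parts in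
`[0,j]_{(r)}`. -/
noncomputable def OmegaWord (r j : ℕ) (u : List (ℕ × ℕ)) : ℕ :=
  Nat.card {f : Fin u.length → ℕ × ℕ // IsWordCPP r j u f}

open Finset

/-!
A colored `π`-partition `f` uses only color `0`: a part `f x = (m, v)` with `m ≥ 1` would
have to be strictly below `f(0_m) = (m, 0)`, because every letter lies above `0_m` once colors
are shifted by `m`. So `f` is a sequence `u` of values `≤ j`, and the remaining conditions say
exactly that `i ↦ (u i, π(i))` is strictly increasing for the lexicographic order along the
chain `π(1) ≺ ⋯ ≺ π(n) ≺ 0_1`, with value `j` at `0_1`. Strict monotonicity along a chain is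
checked on consecutive pairs: `u` increases weakly, and strictly across each descent of `π`.
Adding to `u i` the number of non-descents before `i` turns these sequences into the strictly
increasing sequences with values below `j + n - des π`, i.e. into the `n`-subsets of a set of
size `j + n - des π`.
-/

theorem Fin.strictMono_snoc_iff {α : Type*} [Preorder α] {m : ℕ} (f : Fin m → α) (x : α) :
    StrictMono (Fin.snoc f x : Fin (m + 1) → α) ↔ StrictMono f ∧ ∀ i, f i < x := by
  simpa [Fin.insertNth_last'] using Fin.strictMono_insertNth_iff (Fin.last m) x f

theorem Fin.card_filter_val_congr {m n : ℕ} (h : m = n) (p : ℕ → Prop) [DecidablePred p] :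
    #{i : Fin m | p i} = #{i : Fin n | p i} := by
  subst h
  rfl

theorem card_orderEmbedding_fin (m N : ℕ) : Nat.card (Fin m ↪o Fin N) = N.choose m := by
  rw [Nat.card_congr Set.powersetCard.ofFinEmbEquiv, Set.powersetCard.card,
    Nat.card_eq_fintype_card, Fintype.card_fin]

theorem toLex_lt_toLex_iff_of_ne {α β : Type*} [LinearOrder α] [LinearOrder β] {a b : β}
    {x y : α} (hxy : x ≠ y) :
    toLex (a, x) < toLex (b, y) ↔ a ≤ b ∧ (y < x → a < b) := by
  rw [Prod.Lex.toLex_lt_toLex']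
  refine and_congr_right fun hab => ?_
  rw [hab.lt_iff_ne, ← hxy.le_iff_lt, ← not_lt]
  tauto

section Compatible

variable {m : ℕ} (D : Finset (Fin m))

def IsCompatibleWith (U : Fin (m + 1) → ℕ) : Prop :=
  ∀ i : Fin m, U i.castSucc + (if i ∈ D then 1 else 0) ≤ U i.succ

def weakStepsBefore (i : Fin (m + 1)) : ℕ := #{p ∈ Dᶜ | p.castSucc < i}

theorem weakStepsBefore_zero : weakStepsBefore D 0 = 0 := by
  simp [weakStepsBefore]

theorem weakStepsBefore_succ (i : Fin m) :
    weakStepsBefore D i.succ = weakStepsBefore D i.castSucc + if i ∈ D then 0 else 1 := by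
  simp only [weakStepsBefore, Fin.castSucc_lt_succ_iff, Fin.castSucc_lt_castSucc_iff,
    le_iff_lt_or_eq, filter_or, filter_eq', mem_compl]
  split_ifs with h
  · simp
  · rw [card_union_of_disjoint (by simp), card_singleton]

theorem weakStepsBefore_last : weakStepsBefore D (Fin.last m) = m - #D := by
  simp [weakStepsBefore, Fin.castSucc_lt_last, card_compl]

theorem weakStepsBefore_le_of_strictMono {V : Fin (m + 1) → ℕ} (hV : StrictMono V) :
    weakStepsBefore D ≤ V := by
  intro i
  induction i using Fin.induction with
  | zero => simp [weakStepsBefore_zero]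
  | succ i ih =>
    have := hV (Fin.castSucc_lt_succ (i := i))
    dsimp only at ih ⊢
    rw [weakStepsBefore_succ]
    split_ifs <;> omega

theorem strictMono_add_weakStepsBefore_iff (U : Fin (m + 1) → ℕ) :
    StrictMono (U + weakStepsBefore D) ↔ IsCompatibleWith D U := by
  rw [Fin.strictMono_iff_lt_succ]
  refine forall_congr' fun i => ?_
  simp only [Pi.add_apply, weakStepsBefore_succ]
  split_ifs <;> omega

theorem snoc_add_weakStepsBefore (u : Fin m → ℕ) (j : ℕ) :
    (Fin.snoc u j : Fin (m + 1) → ℕ) + weakStepsBefore D =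
      Fin.snoc (fun i => u i + weakStepsBefore D i.castSucc) (j + (m - #D)) := by
  funext i
  induction i using Fin.lastCases <;> simp [weakStepsBefore_last]

def isCompatibleWithEquivStrictMono (j : ℕ) :
    {u : Fin m → ℕ // IsCompatibleWith D (Fin.snoc u j)} ≃
      {v : Fin m → ℕ // StrictMono (Fin.snoc v (j + (m - #D)) : Fin (m + 1) → ℕ)} where
  toFun u := ⟨fun i => u.1 i + weakStepsBefore D i.castSucc, by
    rw [← snoc_add_weakStepsBefore, strictMono_add_weakStepsBefore_iff]
    exact u.2⟩
  invFun v := ⟨fun i => v.1 i - weakStepsBefore D i.castSucc, by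
    have hle := weakStepsBefore_le_of_strictMono D v.2
    rw [← strictMono_add_weakStepsBefore_iff, snoc_add_weakStepsBefore]
    convert v.2 using 2
    funext i
    have := hle i.castSucc
    simp only [Fin.snoc_castSucc] at this
    omega⟩
  left_inv u := by ext i; simp
  right_inv v := by
    ext i
    have := weakStepsBefore_le_of_strictMono D v.2 i.castSucc
    simp only [Fin.snoc_castSucc] at this ⊢
    omega

def strictMonoSnocEquivOrderEmbedding (N : ℕ) :
    {v : Fin m → ℕ // StrictMono (Fin.snoc v N : Fin (m + 1) → ℕ)} ≃ (Fin m ↪o Fin N) where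
  toFun v :=
    OrderEmbedding.ofStrictMono (fun i => ⟨v.1 i, ((Fin.strictMono_snoc_iff _ _).1 v.2).2 i⟩)
      fun _ _ h => ((Fin.strictMono_snoc_iff _ _).1 v.2).1 h
  invFun e := ⟨fun i => e i,
    (Fin.strictMono_snoc_iff _ _).2 ⟨fun _ _ h => e.strictMono h, fun i => (e i).2⟩⟩
  left_inv _ := rfl
  right_inv _ := rfl

theorem card_isCompatibleWith (j : ℕ) :
    Nat.card {u : Fin m → ℕ // IsCompatibleWith D (Fin.snoc u j)} = (j + m - #D).choose m := by
  rw [Nat.card_congr ((isCompatibleWithEquivStrictMono D j).trans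
      (strictMonoSnocEquivOrderEmbedding _)),
    card_orderEmbedding_fin, ← Nat.add_sub_assoc (by simpa using card_le_univ D)]

theorem strictMono_toLex_iff_isCompatibleWith {α : Type*} [LinearOrder α]
    (U : Fin (m + 1) → ℕ) {K : Fin (m + 1) → α} (hK : Function.Injective K) :
    StrictMono (fun i => toLex (U i, K i)) ↔
      IsCompatibleWith {i : Fin m | K i.succ < K i.castSucc} U := by
  rw [Fin.strictMono_iff_lt_succ]
  refine forall_congr' fun i => ?_
  rw [toLex_lt_toLex_iff_of_ne (hK.ne (Fin.castSucc_lt_succ (i := i)).ne)]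
  simp only [mem_filter, mem_univ, true_and]
  by_cases h : K i.succ < K i.castSucc
  · simp only [h, if_true, true_implies]
    omega
  · simp only [h, if_false, false_implies, and_true, add_zero]

end Compatible

def letterKey (x : ℕ × ℕ) : ℕ ×ₗ ℕ := toLex (x.2, x.1)

theorem letterLT_iff_letterKey_lt {x y : ℕ × ℕ} : letterLT x y ↔ letterKey x < letterKey y :=
  (Prod.Lex.toLex_lt_toLex (x := (x.2, x.1)) (y := (y.2, y.1))).symm

theorem letterKey_injective : Function.Injective letterKey := fun x y h => by
  simp only [letterKey, toLex_inj, Prod.mk.injEq] at h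
  exact Prod.ext h.2 h.1

theorem shiftLetter_zero {r : ℕ} {x : ℕ × ℕ} (hx : x.2 < r) : shiftLetter r 0 x = x := by
  simp [shiftLetter, Nat.mod_eq_of_lt hx]

-- Position `w.length` of `w.getD · (0, 1)` is the letter `0_1` closing the chain.
def wordDes (w : List (ℕ × ℕ)) : Finset (Fin w.length) :=
  {i | letterLT (w.getD (i + 1) (0, 1)) (w.getD i (0, 1))}

section Word

variable {r j : ℕ} {w : List (ℕ × ℕ)}

theorem fst_eq_zero_of_isWordCPP (hpos : ∀ x ∈ w, 0 < x.1) {f : Fin w.length → ℕ × ℕ}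
    (hf : IsWordCPP r j w f) (i : Fin w.length) : (f i).1 = 0 := by
  obtain ⟨hbound, -, -, -, hzero, -⟩ := hf
  by_contra h
  have hk := (hbound i).1
  have hlt := hzero i (f i).1 (Nat.one_le_iff_ne_zero.2 h) hk rfl (by
    have := hpos _ (w.get_mem i)
    simp only [letterLT, shiftLetter, Nat.mod_eq_of_lt hk, Nat.add_sub_cancel_left, Nat.mod_self]
    omega)
  simp [partLT] at hlt

theorem isWordCPP_zero_iff [NeZero r] (hcol : ∀ x ∈ w, x.2 < r) (u : Fin w.length → ℕ) :
    IsWordCPP r j w (fun i => (0, u i)) ↔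
      (∀ i k, i < k → u i ≤ u k ∧ (letterLT w[k] w[i] → u i < u k)) ∧
        ∀ i, u i ≤ j ∧ (u i = j → w[i].2 = 0) := by
  have hshift : ∀ i : Fin w.length, shiftLetter r 0 w[(i : ℕ)] = w[(i : ℕ)] :=
    fun i => shiftLetter_zero (hcol _ (w.get_mem i))
  simp only [IsWordCPP, partLE, partLT, List.get_eq_getElem, hshift]
  constructor
  · rintro ⟨hj, hmono, hstrict, -, -, hcolor⟩
    exact ⟨fun i k hik => ⟨((hmono i k hik).resolve_left (lt_irrefl 0)).2,
      fun h => ((hstrict i k hik trivial h).resolve_left (lt_irrefl 0)).2⟩,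
      fun i => ⟨(hj i).2, hcolor i⟩⟩
  · rintro ⟨hpair, hlast⟩
    refine ⟨fun i => ⟨NeZero.pos r, (hlast i).1⟩,
      fun i k hik => Or.inr ⟨trivial, (hpair i k hik).1⟩,
      fun i k hik _ h => Or.inr ⟨trivial, (hpair i k hik).2 h⟩, fun _ m hm _ => Or.inl hm,
      fun _ m hm _ h0 => absurd h0 (by omega), fun i => (hlast i).2⟩

theorem injective_getD_sentinel (hpos : ∀ x ∈ w, 0 < x.1) (hnd : w.Nodup) :
    Function.Injective fun i : Fin (w.length + 1) => w.getD i (0, 1) := by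
  have h01 : (0, 1) ∉ w := fun h => by simpa using hpos _ h
  intro i k h
  induction i using Fin.lastCases <;> induction k using Fin.lastCases <;>
    simp only [Fin.val_last, Fin.val_castSucc, List.getD_eq_getElem, List.getD_eq_default,
      le_refl, Fin.is_lt] at h
  · rfl
  · exact absurd (h ▸ w.getElem_mem _) h01
  · exact absurd (h.symm ▸ w.getElem_mem _) h01
  · rw [hnd.getElem_inj_iff, Fin.val_inj] at h
    rw [h]

theorem isWordCPP_zero_iff_strictMono [NeZero r] (hpos : ∀ x ∈ w, 0 < x.1)
    (hcol : ∀ x ∈ w, x.2 < r) (hnd : w.Nodup) (u : Fin w.length → ℕ) :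
    IsWordCPP r j w (fun i => (0, u i)) ↔
      StrictMono fun i : Fin (w.length + 1) =>
        toLex ((Fin.snoc u j : Fin (w.length + 1) → ℕ) i, letterKey (w.getD i (0, 1))) := by
  have hsnoc : (fun i : Fin (w.length + 1) =>
      toLex ((Fin.snoc u j : Fin (w.length + 1) → ℕ) i, letterKey (w.getD i (0, 1)))) =
      Fin.snoc (fun i : Fin w.length => toLex (u i, letterKey w[i]))
        (toLex (j, letterKey (0, 1))) := by
    funext i
    induction i using Fin.lastCases <;> simp
  rw [isWordCPP_zero_iff hcol, hsnoc, Fin.strictMono_snoc_iff]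
  refine and_congr (forall₂_congr fun i k => imp_congr_right fun hik => ?_)
    (forall_congr' fun i => ?_)
  · have hne : w[i] ≠ w[k] := by
      rw [Fin.getElem_fin, Fin.getElem_fin, Ne, hnd.getElem_inj_iff, Fin.val_inj]
      exact hik.ne
    rw [letterLT_iff_letterKey_lt, toLex_lt_toLex_iff_of_ne (letterKey_injective.ne hne)]
  · have := hpos _ (w.getElem_mem i.2)
    simp only [Prod.Lex.toLex_lt_toLex', letterKey]
    omega

theorem omegaWord_eq_card_isCompatibleWith [NeZero r] (hpos : ∀ x ∈ w, 0 < x.1)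
    (hcol : ∀ x ∈ w, x.2 < r) (hnd : w.Nodup) :
    OmegaWord r j w =
      Nat.card {u : Fin w.length → ℕ // IsCompatibleWith (wordDes w) (Fin.snoc u j)} := by
  have hcompat : ∀ u, IsWordCPP r j w (fun i => (0, u i)) ↔
      IsCompatibleWith (wordDes w) (Fin.snoc u j) := fun u => by
    rw [isWordCPP_zero_iff_strictMono hpos hcol hnd, strictMono_toLex_iff_isCompatibleWith _
      (K := fun i => letterKey (w.getD i (0, 1)))
      (letterKey_injective.comp (injective_getD_sentinel hpos hnd))]
    congr!
    ext i
    simp [wordDes, letterLT_iff_letterKey_lt]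
  have hzero : ∀ f, IsWordCPP r j w f → (fun i => (0, (f i).2)) = f := fun f h =>
    funext fun i => Prod.ext (fst_eq_zero_of_isWordCPP hpos h i).symm rfl
  exact Nat.card_congr
    { toFun f := ⟨fun i => (f.1 i).2, (hcompat _).1 (by rw [hzero f.1 f.2]; exact f.2)⟩
      invFun u := ⟨fun i => (0, u.1 i), (hcompat _).2 u.2⟩
      left_inv f := Subtype.ext (hzero f.1 f.2)
      right_inv _ := rfl }

end Word

namespace ColoredPerm

variable {r n : ℕ}

theorem length_word (a : ColoredPerm r n) : (word a).length = n := List.length_ofFn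

theorem word_getD (a : ColoredPerm r n) (i : ℕ) : (word a).getD i (0, 1) = letterAt a i := by
  unfold letterAt
  split_ifs with h <;> simp [word, letterOf, h]

theorem pos_of_mem_word {a : ColoredPerm r n} {x : ℕ × ℕ} (hx : x ∈ word a) : 0 < x.1 := by
  obtain ⟨i, rfl⟩ := List.mem_ofFn.1 hx
  exact Nat.succ_pos _

theorem color_lt_of_mem_word [NeZero r] {a : ColoredPerm r n} {x : ℕ × ℕ} (hx : x ∈ word a) :
    x.2 < r := by
  obtain ⟨i, rfl⟩ := List.mem_ofFn.1 hx
  exact ZMod.val_lt _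

theorem word_nodup (a : ColoredPerm r n) : (word a).Nodup :=
  List.nodup_ofFn.2 fun _ _ h =>
    a.perm.injective (Fin.ext (by simpa [letterOf] using congrArg Prod.fst h))

theorem card_wordDes_word (a : ColoredPerm r n) : #(wordDes (word a)) = des a := by
  simp only [wordDes, word_getD, des, Des]
  exact Fin.card_filter_val_congr (length_word a)
    fun k => letterLT (letterAt a (k + 1)) (letterAt a k)

end ColoredPerm

open ColoredPerm in
theorem omegaWord_eq_choose_general (r n : ℕ) [NeZero r]
    (a : ColoredPerm r n) (j : ℕ) :
    OmegaWord r j (word a) = (j + n - des a).choose n := by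
  rw [omegaWord_eq_card_isCompatibleWith (fun _ => pos_of_mem_word)
    (fun _ => color_lt_of_mem_word) (word_nodup a), card_isCompatibleWith, card_wordDes_word,
    length_word]

open ColoredPerm in
/-- For `π ∈ G_{r,n}` identified with its one-line word,
`Ω_π(j) = binomial(j + n − des(π), n)`. -/
theorem omegaWord_eq_choose (r n : ℕ) [NeZero r] (hn : 1 ≤ n)
    (a : ColoredPerm r n) (j : ℕ) :
    OmegaWord r j (word a) = (j + n - des a).choose n :=
  omegaWord_eq_choose_general r n a j
end

section
/- Let π ∈ G_{r,n} and I ⊆ {1, …, n}, and let C(I, π) be the colored chain poset: the r-colored poset on {π(1), …, π(n), 0_1, …, 0_{r−1}} whose partial order is generated by 0_1 ≺ 0_2 ≺ ⋯ ≺ 0_{r−1} together with, for each i ∈ {1, …, n} with i ∉ I (and π(n+1) := 0_1), the relation π(i) ≺ π(i+1). Then for every σ ∈ G_{r,n}: σ belongs to ⋃_{w ∈ L(C(I,π))} CL(w) if and only if Des(σ⁻¹·π) ⊆ I, where σ⁻¹·π is computed in the group G_{r,n}. -/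
open scoped BigOperators

/-- An `r`-colored poset: a finite poset whose elements are the symbols
`0_1, …, 0_{r−1}` (encoded as `(0, m)`) together with finitely many colored letters
(pairs `(value, color)` with positive value and color `< r`) having pairwise distinct
values, such that `0_1 ≺ 0_2 ≺ ⋯ ≺ 0_{r−1}`. -/
structure ColoredPoset (r : ℕ) where
  elems : Finset (ℕ × ℕ)
  rel : ℕ × ℕ → ℕ × ℕ → Prop
  zero_mem : ∀ m, 1 ≤ m → m < r → ((0 : ℕ), m) ∈ elems
  zero_only : ∀ x ∈ elems, x.1 = 0 → 1 ≤ x.2 ∧ x.2 < r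
  col_lt : ∀ x ∈ elems, x.2 < r
  val_inj : ∀ x ∈ elems, ∀ y ∈ elems, 1 ≤ x.1 → x.1 = y.1 → x = y
  rel_refl : ∀ x ∈ elems, rel x x
  rel_antisymm : ∀ x ∈ elems, ∀ y ∈ elems, rel x y → rel y x → x = y
  rel_trans : ∀ x ∈ elems, ∀ y ∈ elems, ∀ z ∈ elems, rel x y → rel y z → rel x z
  zero_chain : ∀ m m', 1 ≤ m → m ≤ m' → m' < r → rel (0, m) (0, m')

/-- A colored `P`-partition of the `r`-colored poset `P` with parts in
`[0,j]_{(r)} = {0,…,r−1} × {0,…,j}` (a part `(k, u)` lies in block `X_k`):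
(i) `f(0_m) = (m, 0)`; (ii) `f` is weakly increasing along `≺`;
(iii) strict increase when both parts lie in block `k` and the `k`-shifted letters
decrease; (iv) only a letter of color `k` may take the maximal value `(k, j)`. -/
def IsCPP (r j : ℕ) (P : ColoredPoset r) (f : {x // x ∈ P.elems} → ℕ × ℕ) : Prop :=
  (∀ x, (f x).1 < r ∧ (f x).2 ≤ j) ∧
  (∀ m (h1 : 1 ≤ m) (h2 : m < r), f ⟨(0, m), P.zero_mem m h1 h2⟩ = (m, 0)) ∧
  (∀ x y, P.rel x.1 y.1 → partLE (f x) (f y)) ∧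
  (∀ x y, P.rel x.1 y.1 → (f x).1 = (f y).1 →
      letterLT (shiftLetter r (f x).1 y.1) (shiftLetter r (f x).1 x.1) →
      partLT (f x) (f y)) ∧
  (∀ x, (f x).2 = j → x.1.2 = (f x).1)

/-- The order polynomial `Ω_P(j)`: the number of colored `P`-partitions with parts
in `[0,j]_{(r)}`. -/
noncomputable def Omega (r j : ℕ) (P : ColoredPoset r) : ℕ :=
  Nat.card {f : {x // x ∈ P.elems} → ℕ × ℕ // IsCPP r j P f}

/-- `w` is a linear extension of the `r`-colored poset `P`: a word listing each
element of `P` exactly once, with `x` before `y` whenever `x ≺ y`. -/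
def IsLinExt {r : ℕ} (P : ColoredPoset r) (w : List (ℕ × ℕ)) : Prop :=
  w.Nodup ∧ (∀ x, x ∈ w ↔ x ∈ P.elems) ∧
  ∀ x ∈ P.elems, ∀ y ∈ P.elems, P.rel x y → x ≠ y → w.idxOf x < w.idxOf y

/-- The number of zero symbols appearing strictly before `x` in the word `w`. -/
def zerosBefore (w : List (ℕ × ℕ)) (x : ℕ × ℕ) : ℕ :=
  ((w.take (w.idxOf x)).filter fun z => decide (z.1 = 0)).length

/-- The `i`-th block of the word `w`: its colored letters (positive value) preceded by
exactly `i` zero symbols. -/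
def block (w : List (ℕ × ℕ)) (i : ℕ) : List (ℕ × ℕ) :=
  w.filter fun x => decide (1 ≤ x.1 ∧ zerosBefore w x = i)

/-- `π_i`: the `i`-th block of `w` with every letter shifted by `i`. -/
def blockWord (r : ℕ) (w : List (ℕ × ℕ)) (i : ℕ) : List (ℕ × ℕ) :=
  (block w i).map (shiftLetter r i)

/-- `u ∈ CL(w)`: `u` is a shuffle of the shifted blocks `π_0, …, π_{r−1}` of `w`,
i.e. the letters of `u` are exactly those of `π_0, …, π_{r−1}` and each `π_i`
is a subsequence of `u`. -/
def IsColoredLinExt (r : ℕ) (w u : List (ℕ × ℕ)) : Prop :=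
  (↑u : Multiset (ℕ × ℕ)) =
      ∑ i ∈ Finset.range r, (↑(blockWord r w i) : Multiset (ℕ × ℕ)) ∧
  ∀ i < r, (blockWord r w i).Sublist u

open Classical in
/-- The (finite) set `L(P)` of linear extensions of `P`. -/
noncomputable def LinExts {r : ℕ} (P : ColoredPoset r) : Finset (List (ℕ × ℕ)) :=
  P.elems.toList.permutations.toFinset.filter (IsLinExt P)

open Classical in
/-- The (finite) set `CL(w)` of colored linear extensions of `w`. -/
noncomputable def ColLinExts (r : ℕ) (w : List (ℕ × ℕ)) : Finset (List (ℕ × ℕ)) :=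
  (((List.range r).flatMap fun i => blockWord r w i).permutations.toFinset).filter
    (IsColoredLinExt r w)

/-- `π(i+1)`, where the letter after the last one is the sentinel `0_1`. -/
def nextLetter {r n : ℕ} (a : ColoredPerm r n) (p : Fin n) : ℕ × ℕ :=
  if h : p.1 + 1 < n then letterOf a ⟨p.1 + 1, h⟩ else (0, 1)

/-- The underlying element set of the posets `Z(I,π)` and `C(I,π)`: the letters of
`π` together with the zero symbols `0_1, …, 0_{r−1}`. -/
def permElems (r n : ℕ) (a : ColoredPerm r n) : Finset (ℕ × ℕ) :=
  (Finset.univ.image (letterOf a)) ∪ ((Finset.Ico 1 r).image fun m => ((0 : ℕ), m))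

/-- The generating relations of the colored zig-zag poset `Z(I, π)`:
the chain `0_1 ≺ ⋯ ≺ 0_{r−1}` together with `π(i) ≺ π(i+1)` for `i ∉ I` and
`π(i+1) ≺ π(i)` for `i ∈ I` (with `π(n+1) := 0_1`; positions 0-indexed). -/
def zigzagBase (r n : ℕ) (a : ColoredPerm r n) (I : Finset (Fin n))
    (x y : ℕ × ℕ) : Prop :=
  (∃ m m', 1 ≤ m ∧ m ≤ m' ∧ m' < r ∧ x = ((0 : ℕ), m) ∧ y = ((0 : ℕ), m')) ∨
  (∃ p : Fin n, p ∉ I ∧ x = letterOf a p ∧ y = nextLetter a p) ∨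
  (∃ p : Fin n, p ∈ I ∧ x = nextLetter a p ∧ y = letterOf a p)

/-- The generating relations of the colored chain poset `C(I, π)`:
the chain `0_1 ≺ ⋯ ≺ 0_{r−1}` together with `π(i) ≺ π(i+1)` for `i ∉ I`
(with `π(n+1) := 0_1`; positions 0-indexed). -/
def chainBase (r n : ℕ) (a : ColoredPerm r n) (I : Finset (Fin n))
    (x y : ℕ × ℕ) : Prop :=
  (∃ m m', 1 ≤ m ∧ m ≤ m' ∧ m' < r ∧ x = ((0 : ℕ), m) ∧ y = ((0 : ℕ), m')) ∨
  (∃ p : Fin n, p ∉ I ∧ x = letterOf a p ∧ y = nextLetter a p)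


/-!
Write `τ = σ⁻¹π`. By the group law, the letter of `σ` with the value of `π(i)` sits at
position `|τ(i)|` and has color `color π(i) − color τ(i)`. So if `σ ∈ CL(w)`, then `π(i)` lies in
block `color τ(i)` of `w`, and within a block `w` lists its letters in their order in `σ`, that is,
by increasing `|τ(i)|`. A relation `π(i) ≺ π(i+1)` therefore forces
`(color τ(i), |τ(i)|) ≤ (color τ(i+1), |τ(i+1)|)` lexicographically, and `π(n) ≺ 0_1` forces
`color τ(n) = 0`. Together these say exactly that `i ∉ Des(τ)`.
Conversely, if `Des(τ) ⊆ I`, sort the elements of `C(I, π)` by the key `0_m ↦ (m, 0)`,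
`π(i) ↦ (color τ(i), |τ(i)|)`. The result is a linear extension whose `k`-th shifted block is the
subword of `σ` formed by the letters of `τ`-color `k`.
-/

namespace List

variable {α β : Type*}

section IdxOf

variable [BEq α] [LawfulBEq α]

theorem take_idxOf_eq_filter_of_pairwise [LinearOrder β] {f : α → β} {l : List α}
    (hl : l.Pairwise fun x y => f x < f y) {x : α} (hx : x ∈ l) :
    l.take (l.idxOf x) = l.filter fun y => f y < f x := by
  induction l with
  | nil => simp at hx
  | cons a t ih =>
    rw [pairwise_cons] at hl
    by_cases hax : a = x
    · subst hax
      have : t.filter (fun y => f y < f a) = [] :=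
        filter_eq_nil_iff.2 fun y hy => by simpa using (hl.1 y hy).le
      simp [this]
    · have hxt : x ∈ t := (mem_cons.1 hx).resolve_left (Ne.symm hax)
      rw [idxOf_cons_ne _ (by simpa using hax), take_succ_cons, ih hl.2 hxt,
        filter_cons_of_pos (by simpa using hl.1 x hxt)]

theorem idxOf_lt_idxOf_of_pairwise [LinearOrder β] {f : α → β} {l : List α}
    (hl : l.Pairwise fun x y => f x < f y) {x y : α} (hx : x ∈ l) (hy : y ∈ l)
    (h : f x < f y) : l.idxOf x < l.idxOf y := by
  rw [← mem_take_iff_idxOf_lt hx, take_idxOf_eq_filter_of_pairwise hl hy]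
  simpa using ⟨hx, h⟩

theorem pair_sublist_of_idxOf_lt {l : List α} {x y : α} (hx : x ∈ l) (hy : y ∈ l)
    (h : l.idxOf x < l.idxOf y) : [x, y] <+ l := by
  have hy' : y ∈ l.drop (l.idxOf y) := by
    rw [drop_eq_getElem_cons (idxOf_lt_length_iff.2 hy), getElem_idxOf]
    exact mem_cons_self
  rw [← take_append_drop (l.idxOf y) l]
  exact (singleton_sublist.2 ((mem_take_iff_idxOf_lt hx).2 h)).append (singleton_sublist.2 hy')

end IdxOf

theorem eq_of_pairwise_of_mem_iff [LinearOrder β] {f : α → β} {l₁ l₂ : List α}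
    (h₁ : l₁.Pairwise fun x y => f x < f y) (h₂ : l₂.Pairwise fun x y => f x < f y)
    (h : ∀ x, x ∈ l₁ ↔ x ∈ l₂) : l₁ = l₂ :=
  ((perm_ext_iff_of_nodup h₁.nodup h₂.nodup).2 h).eq_of_pairwise
    (fun _ _ _ _ hab hba => (lt_asymm hab hba).elim) h₁ h₂

theorem length_eq_card_of_nodup [DecidableEq α] {l : List α} {s : Finset α}
    (hl : l.Nodup) (h : ∀ x, x ∈ l ↔ x ∈ s) : l.length = s.card := by
  rw [← toFinset_card_of_nodup hl]
  congr 1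
  ext x
  simp [h]

theorem sum_range_filter_eq_coe [DecidableEq α] {r : ℕ} (l : List α) (g : α → ℕ)
    (hg : ∀ x ∈ l, g x < r) :
    ∑ k ∈ Finset.range r, ((l.filter fun x => g x = k : List α) : Multiset α) = l := by
  ext x
  rw [Multiset.count_sum']
  by_cases hx : x ∈ l
  · simp_rw [← Multiset.filter_coe, Multiset.count_filter]
    rw [Finset.sum_ite_eq, if_pos (Finset.mem_range.2 (hg x hx))]
  · simp [hx]

end List

theorem letterLT_iff {x y : ℕ × ℕ} : letterLT x y ↔ toLex x.swap < toLex y.swap := by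
  rw [Prod.Lex.toLex_lt_toLex]
  simp [letterLT]

theorem shiftLetter_snd (r : ℕ) [NeZero r] (k : ℕ) (x : ℕ × ℕ) :
    (shiftLetter r k x).2 = ((x.2 : ZMod r) - k).val := by
  have hk : k % r ≤ x.2 + r := (Nat.mod_lt k (NeZero.pos r)).le.trans (Nat.le_add_left _ _)
  rw [shiftLetter, ← ZMod.val_natCast, Nat.cast_sub hk, Nat.cast_add, ZMod.natCast_self,
    ZMod.natCast_mod, add_zero]

namespace ColoredPerm

variable {r n : ℕ}

theorem inv_mul_perm_apply (σ a : ColoredPerm r n) (i : Fin n) :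
    (σ⁻¹ * a).perm i = σ.perm⁻¹ (a.perm i) := rfl

theorem inv_mul_col_apply (σ a : ColoredPerm r n) (i : Fin n) :
    (σ⁻¹ * a).col i = a.col i - σ.col ((σ⁻¹ * a).perm i) :=
  (neg_add_eq_sub _ _).trans rfl

theorem mem_Des_iff (b : ColoredPerm r n) (p : Fin n) :
    p ∈ Des b ↔ letterLT (nextLetter b p) (letterOf b p) := by
  have hp : letterAt b p = letterOf b p := dif_pos p.isLt
  have hnext : letterAt b (p + 1) = nextLetter b p := by
    unfold letterAt nextLetter letterOf; rfl
  simp [Des, hp, hnext]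

end ColoredPerm

open ColoredPerm

section Letters

variable {r n : ℕ}

theorem letterOf_fst_injective (b : ColoredPerm r n) :
    Function.Injective fun i => (letterOf b i).1 :=
  fun i j h => b.perm.injective (Fin.ext (by simpa [letterOf] using h))

theorem letterOf_inv_mul [NeZero r] (σ a : ColoredPerm r n) (i : Fin n) :
    letterOf σ ((σ⁻¹ * a).perm i) = shiftLetter r ((σ⁻¹ * a).col i).val (letterOf a i) := by
  refine Prod.ext (by simp [letterOf, shiftLetter, inv_mul_perm_apply]) ?_
  rw [shiftLetter_snd]
  simp [letterOf, inv_mul_col_apply]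

theorem mem_permElems {a : ColoredPerm r n} {x : ℕ × ℕ} :
    x ∈ permElems r n a ↔
      (∃ i, letterOf a i = x) ∨ ∃ m, 1 ≤ m ∧ m < r ∧ ((0 : ℕ), m) = x := by
  simp [permElems, and_assoc]

theorem exists_letterOf_of_mem_permElems {a : ColoredPerm r n} {x : ℕ × ℕ}
    (hx : x ∈ permElems r n a) (h : 0 < x.1) : ∃ i, letterOf a i = x := by
  rcases mem_permElems.1 hx with hi | ⟨m, -, -, rfl⟩
  · exact hi
  · exact absurd h (lt_irrefl 0)

theorem mem_permElems_and_fst_eq_zero {a : ColoredPerm r n} {x : ℕ × ℕ} :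
    x ∈ permElems r n a ∧ x.1 = 0 ↔ ∃ m ∈ Finset.Ico 1 r, ((0 : ℕ), m) = x := by
  constructor
  · rintro ⟨hx, h0⟩
    rcases mem_permElems.1 hx with ⟨i, rfl⟩ | ⟨m, h1, h2, rfl⟩
    · simp [letterOf] at h0
    · exact ⟨m, Finset.mem_Ico.2 ⟨h1, h2⟩, rfl⟩
  · rintro ⟨m, hm, rfl⟩
    rw [Finset.mem_Ico] at hm
    exact ⟨mem_permElems.2 (Or.inr ⟨m, hm.1, hm.2, rfl⟩), rfl⟩

end Letters

section ChainKey

variable {r n : ℕ}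

def relabelLetter (a b : ColoredPerm r n) (x : ℕ × ℕ) : ℕ × ℕ :=
  if h : 0 < x.1 ∧ x.1 ≤ n then letterOf b (a.perm⁻¹ ⟨x.1 - 1, by omega⟩) else x

theorem relabelLetter_of_fst_eq (a b : ColoredPerm r n) (i : Fin n) {x : ℕ × ℕ}
    (hx : x.1 = (letterOf a i).1) : relabelLetter a b x = letterOf b i := by
  have hx' : x.1 = (a.perm i : ℕ) + 1 := hx
  rw [relabelLetter, dif_pos (by omega)]
  congr
  rw [Equiv.Perm.inv_eq_iff_eq]
  exact Fin.ext (by simp [hx'])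

theorem relabelLetter_letterOf (a b : ColoredPerm r n) (i : Fin n) :
    relabelLetter a b (letterOf a i) = letterOf b i :=
  relabelLetter_of_fst_eq a b i rfl

theorem relabelLetter_zero (a b : ColoredPerm r n) (m : ℕ) :
    relabelLetter a b ((0 : ℕ), m) = (0, m) :=
  dif_neg (by simp)

theorem relabelLetter_nextLetter (a b : ColoredPerm r n) (p : Fin n) :
    relabelLetter a b (nextLetter a p) = nextLetter b p := by
  unfold nextLetter
  split_ifs
  · exact relabelLetter_letterOf a b _
  · exact relabelLetter_zero a b 1

def chainKey (a σ : ColoredPerm r n) (x : ℕ × ℕ) : ℕ ×ₗ ℕ :=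
  toLex (relabelLetter a (σ⁻¹ * a) x).swap

theorem chainKey_letterOf (a σ : ColoredPerm r n) (i : Fin n) :
    chainKey a σ (letterOf a i) = toLex (((σ⁻¹ * a).col i).val, ((σ⁻¹ * a).perm i : ℕ) + 1) := by
  rw [chainKey, relabelLetter_letterOf]
  rfl

theorem chainKey_zero (a σ : ColoredPerm r n) (m : ℕ) :
    chainKey a σ ((0 : ℕ), m) = toLex (m, 0) := by
  rw [chainKey, relabelLetter_zero]
  rfl

theorem chainKey_shiftLetter (a σ : ColoredPerm r n) (k : ℕ) (i : Fin n) :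
    chainKey a σ (shiftLetter r k (letterOf a i)) = chainKey a σ (letterOf a i) := by
  rw [chainKey, chainKey, relabelLetter_of_fst_eq a _ i (x := shiftLetter r k (letterOf a i)) rfl,
    relabelLetter_letterOf]

theorem chainKey_letterOf_inv_mul [NeZero r] (a σ : ColoredPerm r n) (i : Fin n) :
    chainKey a σ (letterOf σ ((σ⁻¹ * a).perm i)) = chainKey a σ (letterOf a i) := by
  rw [letterOf_inv_mul, chainKey_shiftLetter]

theorem mem_Des_inv_mul_iff (a σ : ColoredPerm r n) (p : Fin n) :
    p ∈ Des (σ⁻¹ * a) ↔ chainKey a σ (nextLetter a p) < chainKey a σ (letterOf a p) := by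
  rw [mem_Des_iff, letterLT_iff, chainKey, chainKey, relabelLetter_nextLetter,
    relabelLetter_letterOf]

theorem chainKey_le_of_chainBase {a σ : ColoredPerm r n} {I : Finset (Fin n)}
    (hDes : Des (σ⁻¹ * a) ⊆ I) {x y : ℕ × ℕ} (h : chainBase r n a I x y) :
    chainKey a σ x ≤ chainKey a σ y := by
  rcases h with ⟨m, m', -, hmm', -, rfl, rfl⟩ | ⟨p, hp, rfl, rfl⟩
  · rw [chainKey_zero, chainKey_zero, Prod.Lex.toLex_le_toLex]
    omega
  · exact not_lt.1 fun hlt => hp (hDes ((mem_Des_inv_mul_iff a σ p).2 hlt))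

theorem chainKey_le_of_reflTransGen {a σ : ColoredPerm r n} {I : Finset (Fin n)}
    (hDes : Des (σ⁻¹ * a) ⊆ I) {x y : ℕ × ℕ} (h : Relation.ReflTransGen (chainBase r n a I) x y) :
    chainKey a σ x ≤ chainKey a σ y := by
  induction h with
  | refl => exact le_rfl
  | tail _ hbc ih => exact ih.trans (chainKey_le_of_chainBase hDes hbc)

theorem chainKey_injOn (a σ : ColoredPerm r n) : Set.InjOn (chainKey a σ) (permElems r n a) := by
  intro x hx y hy h
  rcases mem_permElems.1 hx with ⟨i, rfl⟩ | ⟨m, -, -, rfl⟩ <;>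
    rcases mem_permElems.1 hy with ⟨j, rfl⟩ | ⟨m', -, -, rfl⟩ <;>
    simp only [chainKey_letterOf, chainKey_zero, toLex_inj, Prod.mk.injEq] at h
  · have : (σ⁻¹ * a).perm i = (σ⁻¹ * a).perm j := Fin.ext (by omega)
    rw [(σ⁻¹ * a).perm.injective this]
  · omega
  · omega
  · rw [h.1]

theorem pairwise_word_chainKey [NeZero r] (a σ : ColoredPerm r n) :
    (word σ).Pairwise fun x y => (ofLex (chainKey a σ x)).2 < (ofLex (chainKey a σ y)).2 := by
  rw [word, List.pairwise_ofFn]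
  intro j j' hjj'
  obtain ⟨i, rfl⟩ := (σ⁻¹ * a).perm.surjective j
  obtain ⟨i', rfl⟩ := (σ⁻¹ * a).perm.surjective j'
  simpa [chainKey_letterOf_inv_mul, chainKey_letterOf] using hjj'

end ChainKey

section Construction

variable {r n : ℕ}

noncomputable def chainExtension (a σ : ColoredPerm r n) : List (ℕ × ℕ) :=
  (permElems r n a).toList.mergeSort fun x y => chainKey a σ x ≤ chainKey a σ y

variable (a σ : ColoredPerm r n)

theorem mem_chainExtension {x : ℕ × ℕ} : x ∈ chainExtension a σ ↔ x ∈ permElems r n a := by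
  rw [chainExtension, (List.mergeSort_perm _ _).mem_iff, Finset.mem_toList]

theorem pairwise_chainExtension :
    (chainExtension a σ).Pairwise fun x y => chainKey a σ x < chainKey a σ y := by
  have hle := List.pairwise_mergeSort (le := fun x y => chainKey a σ x ≤ chainKey a σ y)
    (fun _ _ _ => by simpa using le_trans) (fun _ _ => by simpa using le_total _ _)
    (permElems r n a).toList
  have hnodup : (chainExtension a σ).Nodup :=
    (List.mergeSort_perm _ _).nodup_iff.2 (Finset.nodup_toList _)
  refine (hle.and hnodup).imp_of_mem fun hx hy ⟨hxy, hne⟩ => lt_of_le_of_ne (by simpa using hxy) ?_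
  exact fun h => hne (chainKey_injOn a σ ((mem_chainExtension a σ).1 hx)
    ((mem_chainExtension a σ).1 hy) h)

theorem zerosBefore_chainExtension [NeZero r] (i : Fin n) :
    zerosBefore (chainExtension a σ) (letterOf a i) = ((σ⁻¹ * a).col i).val := by
  have hi : letterOf a i ∈ chainExtension a σ :=
    (mem_chainExtension a σ).2 (mem_permElems.2 (Or.inl ⟨i, rfl⟩))
  have hc : ((σ⁻¹ * a).col i).val < r := ZMod.val_lt _
  rw [zerosBefore, List.take_idxOf_eq_filter_of_pairwise (pairwise_chainExtension a σ) hi,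
    List.filter_filter]
  refine (List.length_eq_card_of_nodup (((pairwise_chainExtension a σ).nodup).filter _)
    (s := (Finset.Icc 1 ((σ⁻¹ * a).col i).val).image fun m => ((0 : ℕ), m)) ?_).trans ?_
  · intro x
    simp only [List.mem_filter, mem_chainExtension, Bool.and_eq_true, decide_eq_true_eq,
      Finset.mem_image, Finset.mem_Icc]
    constructor
    · rintro ⟨hx, h0, hlt⟩
      obtain ⟨m, hm, rfl⟩ := mem_permElems_and_fst_eq_zero.1 ⟨hx, h0⟩
      rw [chainKey_zero, chainKey_letterOf, Prod.Lex.toLex_lt_toLex] at hlt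
      exact ⟨m, ⟨(Finset.mem_Ico.1 hm).1, by omega⟩, rfl⟩
    · rintro ⟨m, ⟨hm, hmc⟩, rfl⟩
      refine ⟨mem_permElems.2 (Or.inr ⟨m, hm, by omega, rfl⟩), rfl, ?_⟩
      rw [chainKey_zero, chainKey_letterOf, Prod.Lex.toLex_lt_toLex]
      omega
  · rw [Finset.card_image_of_injective _ fun _ _ h => (Prod.mk.inj h).2, Nat.card_Icc,
      Nat.add_sub_cancel]

theorem block_chainExtension [NeZero r] (k : ℕ) :
    block (chainExtension a σ) k =
      (chainExtension a σ).filter fun x => 1 ≤ x.1 ∧ (ofLex (chainKey a σ x)).1 = k := by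
  refine List.filter_congr fun x hx => ?_
  by_cases h : 1 ≤ x.1
  · obtain ⟨i, rfl⟩ := exists_letterOf_of_mem_permElems ((mem_chainExtension a σ).1 hx) h
    simp [zerosBefore_chainExtension, chainKey_letterOf]
  · simp [h]

theorem mem_block_chainExtension [NeZero r] {k : ℕ} {x : ℕ × ℕ} :
    x ∈ block (chainExtension a σ) k ↔ ∃ i, ((σ⁻¹ * a).col i).val = k ∧ letterOf a i = x := by
  rw [block_chainExtension, List.mem_filter, mem_chainExtension]
  constructor
  · rintro ⟨hx, hk⟩
    simp only [decide_eq_true_eq] at hk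
    obtain ⟨i, rfl⟩ := exists_letterOf_of_mem_permElems hx hk.1
    exact ⟨i, by simpa [chainKey_letterOf] using hk.2, rfl⟩
  · rintro ⟨i, hk, rfl⟩
    refine ⟨mem_permElems.2 (Or.inl ⟨i, rfl⟩), ?_⟩
    rw [decide_eq_true_eq, chainKey_letterOf]
    exact ⟨Nat.le_add_left 1 _, hk⟩

theorem blockWord_chainExtension [NeZero r] (k : ℕ) :
    blockWord r (chainExtension a σ) k =
      (word σ).filter fun x => (ofLex (chainKey a σ x)).1 = k := by
  refine List.eq_of_pairwise_of_mem_iff (f := chainKey a σ) ?_ ?_ fun x => ?_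
  · rw [blockWord, List.pairwise_map]
    refine (((pairwise_chainExtension a σ).sublist List.filter_sublist)).imp_of_mem
      fun hx hy hxy => ?_
    obtain ⟨i, -, rfl⟩ := (mem_block_chainExtension a σ).1 hx
    obtain ⟨j, -, rfl⟩ := (mem_block_chainExtension a σ).1 hy
    rwa [chainKey_shiftLetter, chainKey_shiftLetter]
  · refine List.pairwise_filter.2 ((pairwise_word_chainKey a σ).imp fun hxy hx hy => ?_)
    simp only [decide_eq_true_eq] at hx hy
    exact Prod.Lex.lt_iff.2 (Or.inr ⟨hx.trans hy.symm, hxy⟩)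
  · simp only [blockWord, List.mem_map, mem_block_chainExtension, List.mem_filter, word,
      List.mem_ofFn, decide_eq_true_eq]
    constructor
    · rintro ⟨_, ⟨i, hk, rfl⟩, rfl⟩
      rw [← hk, ← letterOf_inv_mul, chainKey_letterOf_inv_mul, chainKey_letterOf]
      exact ⟨⟨_, rfl⟩, rfl⟩
    · rintro ⟨⟨j, rfl⟩, hk⟩
      obtain ⟨i, rfl⟩ := (σ⁻¹ * a).perm.surjective j
      simp only [chainKey_letterOf_inv_mul, chainKey_letterOf, ofLex_toLex] at hk
      exact ⟨_, ⟨i, hk, rfl⟩, by rw [← hk, letterOf_inv_mul]⟩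

theorem isColoredLinExt_chainExtension [NeZero r] :
    IsColoredLinExt r (chainExtension a σ) (word σ) := by
  refine ⟨?_, fun k _ => blockWord_chainExtension a σ k ▸ List.filter_sublist⟩
  simp_rw [blockWord_chainExtension]
  refine (List.sum_range_filter_eq_coe _ _ fun x hx => ?_).symm
  obtain ⟨j, rfl⟩ := List.mem_ofFn.1 hx
  obtain ⟨i, rfl⟩ := (σ⁻¹ * a).perm.surjective j
  simpa [chainKey_letterOf_inv_mul, chainKey_letterOf] using ZMod.val_lt _

theorem isLinExt_chainExtension {I : Finset (Fin n)} {Q : ColoredPoset r}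
    (helems : Q.elems = permElems r n a)
    (hrel : ∀ x y, Q.rel x y ↔ Relation.ReflTransGen (chainBase r n a I) x y)
    (hDes : Des (σ⁻¹ * a) ⊆ I) : IsLinExt Q (chainExtension a σ) := by
  refine ⟨(pairwise_chainExtension a σ).nodup, fun x => by rw [helems, mem_chainExtension], ?_⟩
  intro x hx y hy hxy hne
  rw [helems] at hx hy
  have hle := chainKey_le_of_reflTransGen hDes ((hrel x y).1 hxy)
  exact List.idxOf_lt_idxOf_of_pairwise (pairwise_chainExtension a σ)
    ((mem_chainExtension a σ).2 hx) ((mem_chainExtension a σ).2 hy)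
    (lt_of_le_of_ne hle fun h => hne (chainKey_injOn a σ hx hy h))

end Construction

section Forward

variable {r n : ℕ} {a σ : ColoredPerm r n} {w : List (ℕ × ℕ)}

theorem zerosBefore_mono {x y : ℕ × ℕ} (h : w.idxOf x ≤ w.idxOf y) :
    zerosBefore w x ≤ zerosBefore w y :=
  ((List.take_sublist_take_left h).filter _).length_le

theorem zerosBefore_eq_zero (hmem : ∀ x, x ∈ w ↔ x ∈ permElems r n a) {x : ℕ × ℕ}
    (h : ∀ m, 1 ≤ m → m < r → w.idxOf x < w.idxOf ((0 : ℕ), m)) : zerosBefore w x = 0 := by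
  rw [zerosBefore, List.length_eq_zero_iff, List.filter_eq_nil_iff]
  intro z hz hz0
  have hzw := List.mem_of_mem_take hz
  obtain ⟨m, hm, rfl⟩ := mem_permElems_and_fst_eq_zero.1 ⟨(hmem z).1 hzw, by simpa using hz0⟩
  rw [Finset.mem_Ico] at hm
  exact (h m hm.1 hm.2).not_gt ((List.mem_take_iff_idxOf_lt hzw).1 hz)

theorem zerosBefore_lt [NeZero r] (hN : w.Nodup) (hmem : ∀ x, x ∈ w ↔ x ∈ permElems r n a)
    (x : ℕ × ℕ) : zerosBefore w x < r := by
  have hzeros : (w.filter fun z => z.1 = 0).length = r - 1 := by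
    refine (List.length_eq_card_of_nodup (hN.filter _)
      (s := (Finset.Ico 1 r).image fun m => ((0 : ℕ), m)) fun z => ?_).trans ?_
    · simpa only [List.mem_filter, hmem, decide_eq_true_eq, Finset.mem_image]
        using mem_permElems_and_fst_eq_zero
    · rw [Finset.card_image_of_injective _ fun _ _ h => (Prod.mk.inj h).2, Nat.card_Ico]
  have hle := ((List.take_sublist (w.idxOf x) w).filter fun z => z.1 = 0).length_le
  have hr := NeZero.pos r
  rw [zerosBefore]
  omega

theorem zerosBefore_letterOf [NeZero r] (hN : w.Nodup)
    (hmem : ∀ x, x ∈ w ↔ x ∈ permElems r n a)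
    (hsub : ∀ k < r, (blockWord r w k).Sublist (word σ)) (i : Fin n) :
    zerosBefore w (letterOf a i) = ((σ⁻¹ * a).col i).val := by
  set c := zerosBefore w (letterOf a i)
  have hc : c < r := zerosBefore_lt hN hmem _
  have hblock : letterOf a i ∈ block w c := List.mem_filter.2
    ⟨(hmem _).2 (mem_permElems.2 (Or.inl ⟨i, rfl⟩)), by simp [letterOf, c]⟩
  obtain ⟨j, hj⟩ := List.mem_ofFn.1 ((hsub c hc).subset (List.mem_map_of_mem hblock))
  obtain ⟨i', rfl⟩ := (σ⁻¹ * a).perm.surjective j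
  rw [letterOf_inv_mul] at hj
  obtain rfl : i' = i := letterOf_fst_injective a (congrArg Prod.fst hj :)
  have hcol := ZMod.val_injective r (by simpa only [shiftLetter_snd] using congrArg Prod.snd hj)
  rw [sub_right_inj, ZMod.natCast_zmod_val] at hcol
  rw [hcol, ZMod.val_cast_of_lt hc]

theorem chainKey_le_of_idxOf_lt [NeZero r] (hN : w.Nodup)
    (hmem : ∀ x, x ∈ w ↔ x ∈ permElems r n a)
    (hsub : ∀ k < r, (blockWord r w k).Sublist (word σ)) {i i' : Fin n}
    (h : w.idxOf (letterOf a i) < w.idxOf (letterOf a i')) :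
    chainKey a σ (letterOf a i) ≤ chainKey a σ (letterOf a i') := by
  have hmemw (j : Fin n) : letterOf a j ∈ w := (hmem _).2 (mem_permElems.2 (Or.inl ⟨j, rfl⟩))
  have hcol : ((σ⁻¹ * a).col i).val ≤ ((σ⁻¹ * a).col i').val := by
    rw [← zerosBefore_letterOf hN hmem hsub, ← zerosBefore_letterOf hN hmem hsub]
    exact zerosBefore_mono h.le
  rw [chainKey_letterOf, chainKey_letterOf, Prod.Lex.toLex_le_toLex]
  rcases hcol.lt_or_eq with hlt | heq
  · exact Or.inl hlt
  refine Or.inr ⟨heq, ?_⟩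
  -- Both letters lie in the same block, so their shifts occur in this order in `σ`.
  have hpair : [letterOf a i, letterOf a i'].Sublist (block w ((σ⁻¹ * a).col i).val) := by
    have h := (List.pair_sublist_of_idxOf_lt (hmemw i) (hmemw i') h).filter
      fun x => decide (1 ≤ x.1 ∧ zerosBefore w x = ((σ⁻¹ * a).col i).val)
    rwa [List.filter_cons_of_pos, List.filter_cons_of_pos, List.filter_nil] at h
    · rw [decide_eq_true_eq, zerosBefore_letterOf hN hmem hsub]
      exact ⟨Nat.le_add_left 1 _, heq.symm⟩
    · rw [decide_eq_true_eq, zerosBefore_letterOf hN hmem hsub]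
      exact ⟨Nat.le_add_left 1 _, rfl⟩
  have hword := (hpair.map (shiftLetter r _)).trans (hsub _ (ZMod.val_lt _))
  rw [List.map_cons, List.map_cons, List.map_nil, ← letterOf_inv_mul, heq,
    ← letterOf_inv_mul] at hword
  have := List.pairwise_iff_forall_sublist.1 (pairwise_word_chainKey a σ) hword
  simp only [chainKey_letterOf_inv_mul, chainKey_letterOf, ofLex_toLex] at this
  exact this.le

theorem chainKey_le_zero_one_of_idxOf_lt [NeZero r] (hN : w.Nodup)
    (hmem : ∀ x, x ∈ w ↔ x ∈ permElems r n a)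
    (hsub : ∀ k < r, (blockWord r w k).Sublist (word σ)) {i : Fin n}
    (h : ∀ m, 1 ≤ m → m < r → w.idxOf (letterOf a i) < w.idxOf ((0 : ℕ), m)) :
    chainKey a σ (letterOf a i) ≤ chainKey a σ ((0 : ℕ), 1) := by
  rw [chainKey_letterOf, chainKey_zero, Prod.Lex.toLex_le_toLex,
    ← zerosBefore_letterOf hN hmem hsub, zerosBefore_eq_zero hmem h]
  exact Or.inl Nat.one_pos

theorem chainKey_le_nextLetter [NeZero r] {I : Finset (Fin n)} (hN : w.Nodup)
    (hmem : ∀ x, x ∈ w ↔ x ∈ permElems r n a)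
    (hbase : ∀ x ∈ permElems r n a, ∀ y ∈ permElems r n a,
      chainBase r n a I x y → x ≠ y → w.idxOf x < w.idxOf y)
    (hsub : ∀ k < r, (blockWord r w k).Sublist (word σ)) {p : Fin n} (hp : p ∉ I) :
    chainKey a σ (letterOf a p) ≤ chainKey a σ (nextLetter a p) := by
  have hstep : chainBase r n a I (letterOf a p) (nextLetter a p) := Or.inr ⟨p, hp, rfl, rfl⟩
  have hpmem : letterOf a p ∈ permElems r n a := mem_permElems.2 (Or.inl ⟨p, rfl⟩)
  unfold nextLetter at hstep ⊢
  split_ifs at hstep ⊢ with hq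
  · refine chainKey_le_of_idxOf_lt hN hmem hsub
      (hbase _ hpmem _ (mem_permElems.2 (Or.inl ⟨_, rfl⟩)) hstep fun h => ?_)
    simpa [Fin.ext_iff] using letterOf_fst_injective a (congrArg Prod.fst h :)
  · refine chainKey_le_zero_one_of_idxOf_lt hN hmem hsub fun m hm hmr => ?_
    have h01mem : ((0 : ℕ), 1) ∈ permElems r n a :=
      mem_permElems.2 (Or.inr ⟨1, le_rfl, by omega, rfl⟩)
    have h01 := hbase _ hpmem _ h01mem hstep (by simp [letterOf])
    rcases hm.eq_or_lt with rfl | hm1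
    · exact h01
    · exact h01.trans (hbase _ h01mem _ (mem_permElems.2 (Or.inr ⟨m, hm, hmr, rfl⟩))
        (Or.inl ⟨1, m, le_rfl, hm1.le, hmr, rfl, rfl⟩) (by simp; omega))

end Forward

open ColoredPerm in
theorem chain_colored_linear_extensions_general (r n : ℕ) [NeZero r]
    (a : ColoredPerm r n) (I : Finset (Fin n)) (Q : ColoredPoset r)
    (helems : Q.elems = permElems r n a)
    (hrel : ∀ x y, Q.rel x y ↔ Relation.ReflTransGen (chainBase r n a I) x y)
    (σ : ColoredPerm r n) :
    (∃ w, IsLinExt Q w ∧ IsColoredLinExt r w (word σ)) ↔ Des (σ⁻¹ * a) ⊆ I := by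
  constructor
  · rintro ⟨w, ⟨hN, hmem, hord⟩, -, hsub⟩ p hpDes
    have hmem' : ∀ x, x ∈ w ↔ x ∈ permElems r n a := fun x => helems ▸ hmem x
    have hbase : ∀ x ∈ permElems r n a, ∀ y ∈ permElems r n a,
        chainBase r n a I x y → x ≠ y → w.idxOf x < w.idxOf y := fun x hx y hy hxy =>
      hord x (helems ▸ hx) y (helems ▸ hy) ((hrel x y).2 (.single hxy))
    by_contra hp
    exact ((mem_Des_inv_mul_iff a σ p).1 hpDes).not_ge
      (chainKey_le_nextLetter hN hmem' hbase hsub hp)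
  · exact fun hDes => ⟨chainExtension a σ, isLinExt_chainExtension a σ helems hrel hDes,
      isColoredLinExt_chainExtension a σ⟩

open ColoredPerm in
/-- For the colored chain poset `C(I, π)`: a colored permutation `σ` is a colored
linear extension of `C(I, π)` if and only if `Des(σ⁻¹π) ⊆ I`. -/
theorem chain_colored_linear_extensions (r n : ℕ) [NeZero r] (hn : 1 ≤ n)
    (a : ColoredPerm r n) (I : Finset (Fin n)) (Q : ColoredPoset r)
    (helems : Q.elems = permElems r n a)
    (hrel : ∀ x y, Q.rel x y ↔ Relation.ReflTransGen (chainBase r n a I) x y)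
    (σ : ColoredPerm r n) :
    (∃ w, IsLinExt Q w ∧ IsColoredLinExt r w (word σ)) ↔ Des (σ⁻¹ * a) ⊆ I :=
  chain_colored_linear_extensions_general r n a I Q helems hrel σ
end
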